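/- Let M ∈ GL(n,ℚ) be the matrix of a nondegenerate bilinear form, H_M = {A ∈ GL(n,ℤ) : A M Aᵀ = M}, and T, T̂ ∈ GL(n,ℚ). Then T and T̂ are conjugate by an element of H_M if and only if there exists P₀ ∈ GL(n,ℤ) with T̂ = P₀ T P₀⁻¹ and there exists C₀ in the centralizer of T in GL(n,ℤ) with C₀ M C₀ᵀ = P₀⁻¹ M (P₀⁻¹)ᵀ. -/
import Mathlib


open Matrix
/-- The rational matrix associated to an integer matrix. -/
def intMatQ {n : ℕ} (P : Matrix (Fin n) (Fin n) ℤ) : Matrix (Fin n) (Fin n) ℚ :=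
  P.map (Int.cast : ℤ → ℚ)

lemma intMatQ_mul {n : ℕ} (P Q : Matrix (Fin n) (Fin n) ℤ) :
    intMatQ (P * Q) = intMatQ P * intMatQ Q := by
  exact Matrix.map_mul (f := Int.castRingHom ℚ)

lemma intMatQ_one {n : ℕ} : intMatQ (1 : Matrix (Fin n) (Fin n) ℤ) = 1 := by
  simp [intMatQ]

lemma intMatQ_inv_mul {n : ℕ} (P : (Matrix (Fin n) (Fin n) ℤ)ˣ) :
    intMatQ ((P⁻¹ : _ˣ) : Matrix (Fin n) (Fin n) ℤ) * intMatQ (P : Matrix (Fin n) (Fin n) ℤ) = 1 := by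
  rw [← intMatQ_mul]; simp [intMatQ_one]

lemma intMatQ_mul_inv {n : ℕ} (P : (Matrix (Fin n) (Fin n) ℤ)ˣ) :
    intMatQ (P : Matrix (Fin n) (Fin n) ℤ) * intMatQ ((P⁻¹ : _ˣ) : Matrix (Fin n) (Fin n) ℤ) = 1 := by
  rw [← intMatQ_mul]; simp [intMatQ_one]

lemma conj_form {n : ℕ} (M A B : Matrix (Fin n) (Fin n) ℚ) (h : A * M * Aᵀ = M)
    (hBA : B * A = 1) : B * M * Bᵀ = M := by
  have key : B * (A * M * Aᵀ) * Bᵀ = (B * A) * M * ((B * A)ᵀ) := by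
    rw [transpose_mul]; noncomm_ring
  calc B * M * Bᵀ = B * (A * M * Aᵀ) * Bᵀ := by rw [h]
    _ = (B * A) * M * ((B * A)ᵀ) := key
    _ = M := by rw [hBA, transpose_one, one_mul, mul_one]

/-- Let `M ∈ GL(n,ℚ)` be the matrix of a nondegenerate bilinear form,
`H_M = {A ∈ GL(n,ℤ) : A M Aᵀ = M}`, and `T, T̂ ∈ GL(n,ℚ)`.  Then `T` and `T̂` are
conjugate by an element of `H_M` iff there is `P₀ ∈ GL(n,ℤ)` with `T̂ = P₀ T P₀⁻¹`
and some `C₀` in the centralizer of `T` in `GL(n,ℤ)` with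
`C₀ M C₀ᵀ = P₀⁻¹ M (P₀⁻¹)ᵀ`. -/
theorem stmt_14 {n : ℕ} (M : Matrix (Fin n) (Fin n) ℚ) (hM : IsUnit M)
    (T That : (Matrix (Fin n) (Fin n) ℚ)ˣ) :
    (∃ P : (Matrix (Fin n) (Fin n) ℤ)ˣ,
      intMatQ (P : Matrix (Fin n) (Fin n) ℤ) * M *
          (intMatQ (P : Matrix (Fin n) (Fin n) ℤ))ᵀ = M ∧
      (That : Matrix (Fin n) (Fin n) ℚ) =
        intMatQ (P : Matrix (Fin n) (Fin n) ℤ) * T *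
          intMatQ ((P⁻¹ : (Matrix (Fin n) (Fin n) ℤ)ˣ) : Matrix (Fin n) (Fin n) ℤ)) ↔
    (∃ P₀ : (Matrix (Fin n) (Fin n) ℤ)ˣ,
      (That : Matrix (Fin n) (Fin n) ℚ) =
        intMatQ (P₀ : Matrix (Fin n) (Fin n) ℤ) * T *
          intMatQ ((P₀⁻¹ : (Matrix (Fin n) (Fin n) ℤ)ˣ) : Matrix (Fin n) (Fin n) ℤ) ∧
      ∃ C₀ : (Matrix (Fin n) (Fin n) ℤ)ˣ,
        intMatQ (C₀ : Matrix (Fin n) (Fin n) ℤ) * T =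
          (T : Matrix (Fin n) (Fin n) ℚ) * intMatQ (C₀ : Matrix (Fin n) (Fin n) ℤ) ∧
        intMatQ (C₀ : Matrix (Fin n) (Fin n) ℤ) * M *
            (intMatQ (C₀ : Matrix (Fin n) (Fin n) ℤ))ᵀ =
          intMatQ ((P₀⁻¹ : (Matrix (Fin n) (Fin n) ℤ)ˣ) : Matrix (Fin n) (Fin n) ℤ) * M *
            (intMatQ ((P₀⁻¹ : (Matrix (Fin n) (Fin n) ℤ)ˣ) : Matrix (Fin n) (Fin n) ℤ))ᵀ) := by
  constructor
  · rintro ⟨P, h1, h2⟩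
    refine ⟨P, h2, 1, ?_, ?_⟩
    · simp [intMatQ_one]
    · have hBM : intMatQ ((P⁻¹ : (Matrix (Fin n) (Fin n) ℤ)ˣ) : Matrix (Fin n) (Fin n) ℤ) * M *
          (intMatQ ((P⁻¹ : (Matrix (Fin n) (Fin n) ℤ)ˣ) : Matrix (Fin n) (Fin n) ℤ))ᵀ = M :=
        conj_form M _ _ h1 (intMatQ_inv_mul P)
      rw [Units.val_one, intMatQ_one, one_mul, transpose_one, mul_one, hBM]
  · rintro ⟨P₀, hT, C₀, hC, hCM⟩
    refine ⟨P₀ * C₀, ?_, ?_⟩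
    · have hval : intMatQ (((P₀ * C₀ : (Matrix (Fin n) (Fin n) ℤ)ˣ)) : Matrix (Fin n) (Fin n) ℤ)
          = intMatQ (P₀ : Matrix (Fin n) (Fin n) ℤ) * intMatQ (C₀ : Matrix (Fin n) (Fin n) ℤ) := by
        rw [Units.val_mul, intMatQ_mul]
      rw [hval]
      set A := intMatQ (P₀ : Matrix (Fin n) (Fin n) ℤ)
      set B := intMatQ ((P₀⁻¹ : (Matrix (Fin n) (Fin n) ℤ)ˣ) : Matrix (Fin n) (Fin n) ℤ)
      set Cq := intMatQ (C₀ : Matrix (Fin n) (Fin n) ℤ)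
      have hAB : A * B = 1 := intMatQ_mul_inv P₀
      calc A * Cq * M * (A * Cq)ᵀ = A * (Cq * M * Cqᵀ) * Aᵀ := by
            rw [transpose_mul]; noncomm_ring
        _ = A * (B * M * Bᵀ) * Aᵀ := by rw [hCM]
        _ = (A * B) * M * ((A * B)ᵀ) := by rw [transpose_mul]; noncomm_ring
        _ = M := by rw [hAB, transpose_one, one_mul, mul_one]
    · have hval : intMatQ (((P₀ * C₀ : (Matrix (Fin n) (Fin n) ℤ)ˣ)) : Matrix (Fin n) (Fin n) ℤ)
          = intMatQ (P₀ : Matrix (Fin n) (Fin n) ℤ) * intMatQ (C₀ : Matrix (Fin n) (Fin n) ℤ) := by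
        rw [Units.val_mul, intMatQ_mul]
      have hval' : intMatQ ((((P₀ * C₀)⁻¹ : (Matrix (Fin n) (Fin n) ℤ)ˣ)) : Matrix (Fin n) (Fin n) ℤ)
          = intMatQ ((C₀⁻¹ : (Matrix (Fin n) (Fin n) ℤ)ˣ) : Matrix (Fin n) (Fin n) ℤ) *
            intMatQ ((P₀⁻¹ : (Matrix (Fin n) (Fin n) ℤ)ˣ) : Matrix (Fin n) (Fin n) ℤ) := by
        rw [_root_.mul_inv_rev, Units.val_mul, intMatQ_mul]
      rw [hval, hval', hT]
      set A := intMatQ (P₀ : Matrix (Fin n) (Fin n) ℤ)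
      set B := intMatQ ((P₀⁻¹ : (Matrix (Fin n) (Fin n) ℤ)ˣ) : Matrix (Fin n) (Fin n) ℤ)
      set Cq := intMatQ (C₀ : Matrix (Fin n) (Fin n) ℤ)
      set D := intMatQ ((C₀⁻¹ : (Matrix (Fin n) (Fin n) ℤ)ˣ) : Matrix (Fin n) (Fin n) ℤ)
      have hCD : Cq * D = 1 := intMatQ_mul_inv C₀
      have hmid : Cq * (T : Matrix (Fin n) (Fin n) ℚ) * D = T := by
        rw [hC, mul_assoc, hCD, mul_one]
      calc A * (T : Matrix (Fin n) (Fin n) ℚ) * B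
          = A * (Cq * (T : Matrix (Fin n) (Fin n) ℚ) * D) * B := by rw [hmid]
        _ = A * Cq * (T : Matrix (Fin n) (Fin n) ℚ) * (D * B) := by noncomm_ring
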